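/- arXiv:2210.06169 — 2 statements merged into one kernel-verified Lean document; each statement's English description precedes it below -/
import Mathlib

section
/- (Céa's Lemma) Let a : V × V → ℝ be a bilinear form on a real normed space V that is continuous with constant γ (|a(u,v)| ≤ γ‖u‖‖v‖) and coercive with constant α (a(v,v) ≥ α‖v‖²), and let f : V → ℝ be linear. If u ∈ V satisfies a(u,v) = f(v) for all v ∈ V, and u_h ∈ W ⊆ V satisfies a(u_h, w) = f(w) for all w in the subspace W, then ‖u − u_h‖ ≤ (γ/α) inf_{w ∈ W} ‖u − w‖. -/
/-- Céa's Lemma: for a continuous (constant `γ`) and coercive (constant `α`) bilinear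
form `a` on a real normed space `V`, a linear functional `f`, an exact solution `u`
and a Galerkin solution `u_h` in a subspace `W`, one has
`‖u - u_h‖ ≤ (γ/α) inf_{w ∈ W} ‖u - w‖`. -/
theorem cea_lemma {V : Type*} [NormedAddCommGroup V] [NormedSpace ℝ V]
    (a : V →ₗ[ℝ] V →ₗ[ℝ] ℝ) (f : V →ₗ[ℝ] ℝ) (γ α : ℝ) (hα : 0 < α) (hαγ : α ≤ γ)
    (hcont : ∀ u v : V, |a u v| ≤ γ * ‖u‖ * ‖v‖)
    (hcoer : ∀ v : V, α * ‖v‖ ^ 2 ≤ a v v)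
    (W : Submodule ℝ V) (u uh : V) (huh : uh ∈ W)
    (hu : ∀ v : V, a u v = f v) (hgal : ∀ w ∈ W, a uh w = f w) :
    ‖u - uh‖ ≤ (γ / α) * ⨅ w : W, ‖u - (w : V)‖ := by
  have hγ : 0 < γ := lt_of_lt_of_le hα hαγ
  -- Galerkin orthogonality
  have horth : ∀ w ∈ W, a (u - uh) w = 0 := by
    intro w hw
    simp [map_sub, hu w, hgal w hw]
  -- key estimate: for each w ∈ W, (α/γ) * ‖u - uh‖ ≤ ‖u - w‖
  have key : ∀ w : W, (α / γ) * ‖u - uh‖ ≤ ‖u - (w : V)‖ := by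
    intro w
    have h1 : α * ‖u - uh‖ ^ 2 ≤ a (u - uh) (u - uh) := hcoer _
    have h2 : a (u - uh) (u - uh) = a (u - uh) (u - (w : V)) := by
      have : a (u - uh) (u - (w : V)) - a (u - uh) (u - uh)
          = a (u - uh) ((uh : V) - (w : V)) := by
        simp only [map_sub]; ring
      have hz := horth ((uh : V) - (w : V)) (W.sub_mem huh w.2)
      linarith [this ▸ hz]
    have h3 : a (u - uh) (u - (w : V)) ≤ γ * ‖u - uh‖ * ‖u - (w : V)‖ :=
      le_trans (le_abs_self _) (hcont _ _)
    have h4 : α * ‖u - uh‖ ^ 2 ≤ γ * ‖u - uh‖ * ‖u - (w : V)‖ := by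
      rw [h2] at h1; linarith
    rcases eq_or_lt_of_le (norm_nonneg (u - uh)) with h0 | h0
    · rw [← h0]
      simp [norm_nonneg]
    · rw [div_mul_eq_mul_div, div_le_iff₀ hγ]
      nlinarith
  rcases isEmpty_or_nonempty W with hW | hW
  · -- W nonempty since uh ∈ W
    exact (hW.false ⟨uh, huh⟩).elim
  · have hbdd : BddBelow (Set.range fun w : W => ‖u - (w : V)‖) := by
      exact ⟨0, by rintro x ⟨w, rfl⟩; positivity⟩
    have hinf : (α / γ) * ‖u - uh‖ ≤ ⨅ w : W, ‖u - (w : V)‖ :=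
      le_ciInf key
    have hαγ' : 0 < α / γ := div_pos hα hγ
    calc ‖u - uh‖ = (γ / α) * ((α / γ) * ‖u - uh‖) := by
          field_simp
      _ ≤ (γ / α) * ⨅ w : W, ‖u - (w : V)‖ := by
          apply mul_le_mul_of_nonneg_left hinf
          positivity
end

section
/- (Eckart–Young for Frobenius norm, rank at most 1 case on finite matrices) For any real m×n matrix X with singular values σ₁ ≥ σ₂ ≥ ..., and any matrix Y of rank ≤ k, the Frobenius norm satisfies ‖X − Y‖_F² ≥ σ_{k+1}² + ... + σ_{min(m,n)}², i.e., truncating the SVD at rank k is the best rank-k approximation in Frobenius norm. -/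
/-!
Let the columns of `V` be an orthonormal basis of `ker Y`; there are at least `n - k` of them.
Then `‖X - Y‖_F² ≥ ‖(X - Y) V‖_F² = ‖X V‖_F² = tr (Vᵀ XᵀX V) = ∑ⱼ λⱼ cⱼ`, where `λ` are the
eigenvalues of `XᵀX` and `cⱼ = ‖Vᵀ uⱼ‖²` for the corresponding orthonormal eigenvectors `uⱼ`.
These weights lie in `[0, 1]` and have total mass `dim ker Y ≥ n - k`; paired with the
non-increasing `σ²`, such weights can do no better than weight `1` on the last `n - k` entries.
-/

open Finset Matrix
open scoped ComplexOrder

theorem Finset.sum_le_sum_mul_of_card_le_sum {ι : Type*} [Fintype ι] {s : Finset ι}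
    {f c : ι → ℝ} {t : ℝ} (hs : ∀ i ∈ s, f i ≤ t) (hsc : ∀ i ∉ s, t ≤ f i) (ht : 0 ≤ t)
    (hc0 : ∀ i, 0 ≤ c i) (hc1 : ∀ i, c i ≤ 1) (hcard : (#s : ℝ) ≤ ∑ i, c i) :
    ∑ i ∈ s, f i ≤ ∑ i, f i * c i := by
  classical
  have hin : ∑ i ∈ s, f i * (1 - c i) ≤ ∑ i ∈ s, t * (1 - c i) :=
    sum_le_sum fun i hi => mul_le_mul_of_nonneg_right (hs i hi) (sub_nonneg.mpr (hc1 i))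
  have hout : ∑ i ∈ sᶜ, t * c i ≤ ∑ i ∈ sᶜ, f i * c i :=
    sum_le_sum fun i hi => mul_le_mul_of_nonneg_right (hsc i (mem_compl.mp hi)) (hc0 i)
  have hmass : t * #s ≤ t * ∑ i, c i := mul_le_mul_of_nonneg_left hcard ht
  rw [← sum_add_sum_compl s (fun i => f i * c i)]
  rw [← sum_add_sum_compl s c, mul_add, mul_sum, mul_sum] at hmass
  simp only [mul_sub, mul_one, sum_sub_distrib, sum_const, nsmul_eq_mul] at hin
  linarith

theorem Fin.sum_filter_le_sum_mul_of_antitone {n : ℕ} (k : ℕ) {f c : Fin n → ℝ}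
    (hf0 : ∀ i, 0 ≤ f i) (hf : Antitone f) (hc0 : ∀ i, 0 ≤ c i) (hc1 : ∀ i, c i ≤ 1)
    (hcard : ((n - k : ℕ) : ℝ) ≤ ∑ i, c i) :
    ∑ i ∈ univ.filter (fun i : Fin n => k ≤ (i : ℕ)), f i ≤ ∑ i, f i * c i := by
  have hcard_filter : #(univ.filter (fun i : Fin n => k ≤ (i : ℕ))) = n - k := by
    have := card_filter_add_card_filter_not (s := univ) (fun i : Fin n => (i : ℕ) < k)
    rw [card_filter_val_lt, card_univ, Fintype.card_fin] at this
    simp only [not_lt] at this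
    omega
  rcases lt_or_ge k n with hk | hk
  · refine sum_le_sum_mul_of_card_le_sum (t := f ⟨k, hk⟩) (fun i hi => hf ?_)
      (fun i hi => hf ?_) (hf0 _) hc0 hc1 (by rwa [hcard_filter])
    · simpa [Fin.le_def] using hi
    · simp only [mem_filter, mem_univ, true_and, not_le] at hi
      exact Fin.le_def.mpr hi.le
  · refine sum_le_sum_mul_of_card_le_sum (t := 0) (fun i hi => ?_) (fun i _ => hf0 i) le_rfl
      hc0 hc1 (by rwa [hcard_filter])
    simp only [mem_filter, mem_univ, true_and] at hi
    omega

section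

variable {𝕜 : Type*} [RCLike 𝕜] {m n d : Type*} [Fintype m] [Fintype n] [Fintype d]

theorem Matrix.exists_orthonormal_ker_cols [DecidableEq n] (Y : Matrix m n 𝕜) :
    ∃ (r : ℕ) (V : Matrix n (Fin r) 𝕜),
      Vᴴ * V = 1 ∧ Y * V = 0 ∧ Y.rank + r = Fintype.card n := by
  let b := stdOrthonormalBasis 𝕜 (LinearMap.ker (toEuclideanLin Y))
  refine ⟨_, Matrix.of fun i j => (b j : EuclideanSpace 𝕜 n) i, ?_, ?_, ?_⟩
  · ext a c
    simpa [Matrix.mul_apply, Matrix.one_apply, EuclideanSpace.inner_eq_star_dotProduct,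
      dotProduct, mul_comm] using orthonormal_iff_ite.mp b.orthonormal a c
  · ext i j
    have := congrArg (· i) (LinearMap.mem_ker.mp (b j).2)
    simp only [toLpLin_apply, mulVec, dotProduct] at this
    simpa only [mul_apply, of_apply, zero_apply, WithLp.ofLp_zero, Pi.zero_apply] using this
  · rw [rank_eq_finrank_range_toLin Y (EuclideanSpace.basisFun m 𝕜).toBasis
      (EuclideanSpace.basisFun n 𝕜).toBasis, ← toEuclideanLin_eq_toLin_orthonormal,
      LinearMap.finrank_range_add_finrank_ker, finrank_euclideanSpace]

theorem Matrix.posSemidef_one_sub_mul_conjTranspose [DecidableEq n] [DecidableEq d]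
    {V : Matrix n d 𝕜} (hV : Vᴴ * V = 1) : (1 - V * Vᴴ).PosSemidef := by
  have hP : (1 - V * Vᴴ) * (1 - V * Vᴴ)ᴴ = 1 - V * Vᴴ := by
    rw [conjTranspose_sub, conjTranspose_one, conjTranspose_mul, conjTranspose_conjTranspose,
      sub_mul, mul_sub, mul_sub, Matrix.one_mul, Matrix.mul_one, Matrix.one_mul,
      Matrix.mul_assoc, ← Matrix.mul_assoc Vᴴ, hV, Matrix.one_mul]
    abel
  exact hP ▸ posSemidef_self_mul_conjTranspose _

theorem Matrix.trace_conjTranspose_mul_self_mul_le [DecidableEq n] [DecidableEq d]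
    {V : Matrix n d 𝕜} (hV : Vᴴ * V = 1) (M : Matrix m n 𝕜) :
    ((M * V)ᴴ * (M * V)).trace ≤ (Mᴴ * M).trace := by
  have h := ((posSemidef_one_sub_mul_conjTranspose hV).mul_mul_conjTranspose_same M).trace_nonneg
  rw [Matrix.mul_sub, Matrix.sub_mul, trace_sub, Matrix.mul_one, trace_mul_comm] at h
  rw [trace_mul_comm, conjTranspose_mul]
  simpa only [Matrix.mul_assoc, sub_nonneg] using h

theorem Matrix.diag_self_mul_conjTranspose_le_one [DecidableEq n] [DecidableEq d]
    {W : Matrix n d 𝕜} (hW : Wᴴ * W = 1) (j : n) : (W * Wᴴ) j j ≤ 1 := by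
  have := (posSemidef_one_sub_mul_conjTranspose hW).diag_nonneg (i := j)
  simpa [sub_nonneg] using this

theorem Matrix.trace_conjTranspose_mul_diagonal_mul [DecidableEq n] (D : n → 𝕜)
    (W : Matrix n d 𝕜) : (Wᴴ * diagonal D * W).trace = ∑ j, D j * (W * Wᴴ) j j := by
  rw [Matrix.mul_assoc, trace_mul_comm, Matrix.mul_assoc]
  simp only [trace, diag, diagonal_mul]

theorem Matrix.IsHermitian.exists_trace_conjTranspose_mul_mul_eq_sum_eigenvalues_mul
    [DecidableEq n] [DecidableEq d] {A : Matrix n n ℝ} (hA : A.IsHermitian) {V : Matrix n d ℝ}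
    (hV : Vᴴ * V = 1) :
    ∃ c : n → ℝ, (∀ j, 0 ≤ c j) ∧ (∀ j, c j ≤ 1) ∧ ∑ j, c j = Fintype.card d ∧
      (Vᴴ * A * V).trace = ∑ j, hA.eigenvalues j * c j := by
  set U : Matrix n n ℝ := ↑hA.eigenvectorUnitary
  set W := star U * V
  have hU : U * star U = 1 := Unitary.coe_mul_star_self _
  have hW : Wᴴ * W = 1 := by
    rw [conjTranspose_mul, star_eq_conjTranspose, conjTranspose_conjTranspose, Matrix.mul_assoc,
      ← Matrix.mul_assoc U, hU, Matrix.one_mul, hV]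
  refine ⟨fun j => (W * Wᴴ) j j, fun j => (posSemidef_self_mul_conjTranspose W).diag_nonneg,
    diag_self_mul_conjTranspose_le_one hW, ?_, ?_⟩
  · change (W * Wᴴ).trace = _
    rw [trace_mul_comm, hW, trace_one]
  · have hAV : Vᴴ * A * V = Wᴴ * diagonal hA.eigenvalues * W := by
      conv_lhs => rw [hA.spectral_theorem]
      simp only [W, U, Unitary.conjStarAlgAut_apply, RCLike.ofReal_real_eq_id,
        Function.id_comp, conjTranspose_mul, star_eq_conjTranspose, conjTranspose_conjTranspose,
        Matrix.mul_assoc]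
    rw [hAV, trace_conjTranspose_mul_diagonal_mul]

theorem Matrix.trace_conjTranspose_mul_self_eq_sum_sq (M : Matrix m n ℝ) :
    (Mᴴ * M).trace = ∑ i, ∑ j, M i j ^ 2 := by
  rw [trace, sum_comm]
  simp [mul_apply, sq]

end

/-- Eckart–Young theorem (Frobenius norm): if `σ` is the non-increasing sequence of
singular values of `X` (i.e. `σ i ^ 2` enumerates the eigenvalues of `XᵀX`), then for
any matrix `Y` of rank at most `k`,
`σ_{k+1}² + σ_{k+2}² + ... ≤ ‖X - Y‖_F²`. -/
theorem eckart_young_frobenius {m n : ℕ} (X Y : Matrix (Fin m) (Fin n) ℝ)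
    (k : ℕ) (hY : Y.rank ≤ k)
    (σ : Fin n → ℝ) (hσ0 : ∀ i, 0 ≤ σ i) (hσanti : Antitone σ)
    (hσ : ∃ e : Fin n ≃ Fin n, ∀ i,
      σ i ^ 2 = (Matrix.posSemidef_conjTranspose_mul_self X).1.eigenvalues (e i)) :
    ∑ i ∈ Finset.univ.filter (fun i : Fin n => k ≤ (i : ℕ)), σ i ^ 2 ≤
      ∑ i, ∑ j, (X - Y) i j ^ 2 := by
  obtain ⟨e, he⟩ := hσ
  obtain ⟨d, V, hV, hYV, hrank⟩ := Y.exists_orthonormal_ker_cols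
  obtain ⟨c, hc0, hc1, hcsum, htrace⟩ :=
    (posSemidef_conjTranspose_mul_self X).1.exists_trace_conjTranspose_mul_mul_eq_sum_eigenvalues_mul
      hV
  have hd : ((n - k : ℕ) : ℝ) ≤ ∑ i, c (e i) := by
    rw [Fintype.card_fin] at hrank
    rw [e.sum_comp c, hcsum, Fintype.card_fin]
    exact_mod_cast (by omega : n - k ≤ d)
  calc ∑ i ∈ univ.filter (fun i : Fin n => k ≤ (i : ℕ)), σ i ^ 2
      ≤ ∑ i, σ i ^ 2 * c (e i) :=
        Fin.sum_filter_le_sum_mul_of_antitone k (fun i => sq_nonneg _)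
          (fun i j hij => pow_le_pow_left₀ (hσ0 j) (hσanti hij) 2)
          (fun i => hc0 _) (fun i => hc1 _) hd
    _ = (Vᴴ * (Xᴴ * X) * V).trace := by
        simp_rw [htrace, he, ← e.sum_comp (fun j => _ * c j)]
    _ = (((X - Y) * V)ᴴ * ((X - Y) * V)).trace := by
        simp only [Matrix.sub_mul, hYV, sub_zero, conjTranspose_mul, Matrix.mul_assoc]
    _ ≤ ((X - Y)ᴴ * (X - Y)).trace := trace_conjTranspose_mul_self_mul_le hV _
    _ = ∑ i, ∑ j, (X - Y) i j ^ 2 := trace_conjTranspose_mul_self_eq_sum_sq _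
end
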